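/- For every integer p ≥ 1 there is a constant C(p) such that for all λ > 0, the p-dimensional Lebesgue measure of the set { (u_1,...,u_p) : 0 ≤ u_1 ≤ u_2 ≤ ⋯ ≤ u_p and ∏_{j=1}^p u_j^j ≤ λ } is at most C(p) · λ^{2/(p+1)}. -/

import Mathlib

/-!
The product `∏ u_j ^ j` is homogeneous of degree `p (p + 1) / 2`, so the dilation by
`r = λ ^ (2 / (p (p + 1)))` carries the sublevel set at level `1` onto the one at level `λ` and
multiplies its volume by `r ^ p = λ ^ (2 / (p + 1))`. It remains to see that the sublevel set at
level `1` has finite volume. Integrating out the largest coordinate `x`, which ranges over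
`(0, (∏_{j<p} u_j ^ j) ^ (-1 / (p + δ))]`, turns the integral of `(∏_j u_j ^ j) ^ (-γ)` over
`{u monotone, (∏_j u_j ^ j) · u_p ^ δ ≤ 1}` in dimension `p` into an integral of the same kind in
dimension `p - 1`, with `γ' = γ + (1 - p γ) / (p + δ)` and `δ' = p + δ`. The constraint `p γ < 1`
that makes the one-dimensional integral converge is inherited by `(p - 1) γ' < 1`, so induction on
the dimension gives finiteness.
-/

open MeasureTheory Set
open scoped ENNReal Pointwise

def indexPowProd {n : ℕ} (u : Fin n → ℝ) : ℝ := ∏ j : Fin n, u j ^ ((j : ℕ) + 1)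

def orderedSublevel (n : ℕ) (lam : ℝ) : Set (Fin n → ℝ) :=
  {u | (∀ i, 0 ≤ u i) ∧ Monotone u ∧ indexPowProd u ≤ lam}

-- For monotone `u` only the top coordinate matters in the last condition; quantifying over all
-- coordinates keeps the definition meaningful for `n = 0`.
def tiltedSublevel (n : ℕ) (δ : ℝ) : Set (Fin n → ℝ) :=
  {u | (∀ i, 0 < u i) ∧ Monotone u ∧ ∀ i, indexPowProd u * u i ^ δ ≤ 1}

lemma indexPowProd_snoc {n : ℕ} (w : Fin n → ℝ) (x : ℝ) :
    indexPowProd (Fin.snoc w x : Fin (n + 1) → ℝ) = indexPowProd w * x ^ (n + 1) := by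
  simp [indexPowProd, Fin.prod_univ_castSucc]

lemma indexPowProd_pos {n : ℕ} {u : Fin n → ℝ} (hu : ∀ i, 0 < u i) : 0 < indexPowProd u :=
  Finset.prod_pos fun j _ => pow_pos (hu j) _

lemma indexPowProd_smul {n : ℕ} (r : ℝ) (u : Fin n → ℝ) :
    indexPowProd (r • u) = r ^ (∑ j : Fin n, ((j : ℕ) + 1)) * indexPowProd u := by
  simp [indexPowProd, mul_pow, Finset.prod_mul_distrib, Finset.prod_pow_eq_pow_sum]

lemma sum_fin_val_add_one_mul_two (n : ℕ) : (∑ j : Fin n, ((j : ℕ) + 1)) * 2 = n * (n + 1) := by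
  induction n with
  | zero => simp
  | succ n ih =>
    rw [Fin.sum_univ_castSucc, add_mul]
    simp only [Fin.val_castSucc, Fin.val_last, ih]
    ring

lemma measurableSet_tiltedSublevel (n : ℕ) (δ : ℝ) : MeasurableSet (tiltedSublevel n δ) := by
  have hprod : Measurable (indexPowProd : (Fin n → ℝ) → ℝ) := by unfold indexPowProd; fun_prop
  have hpos : MeasurableSet {u : Fin n → ℝ | ∀ i, 0 < u i} := by
    simpa only [ofPred_forall] using
      MeasurableSet.iInter fun i => measurableSet_lt measurable_const (measurable_pi_apply i)
  have hle : MeasurableSet {u : Fin n → ℝ | ∀ i, indexPowProd u * u i ^ δ ≤ 1} := by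
    simpa only [ofPred_forall] using
      MeasurableSet.iInter fun i => measurableSet_le (by fun_prop) measurable_const
  exact hpos.inter (isClosed_monotone.measurableSet.inter hle)

lemma lintegral_le_lintegral_lintegral_snoc {α : Type*} [MeasureSpace α]
    [SigmaFinite (volume : Measure α)] {n : ℕ} (f : (Fin (n + 1) → α) → ℝ≥0∞) :
    ∫⁻ u, f u ≤ ∫⁻ w, ∫⁻ x, f (Fin.snoc w x) := by
  have hmp := (volume_preserving_piFinSuccAbove (fun _ : Fin (n + 1) => α) (Fin.last n)).symm
  rw [← hmp.lintegral_comp_emb (MeasurableEquiv.measurableEmbedding _), Measure.volume_eq_prod,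
    ← lintegral_prod_swap]
  refine (lintegral_prod_le _).trans_eq ?_
  simp [MeasurableEquiv.piFinSuccAbove_symm_apply, Fin.snocEquiv]

lemma lintegral_Ioc_rpow {M c : ℝ} (hM : 0 ≤ M) (hc : -1 < c) :
    ∫⁻ x in Ioc 0 M, ENNReal.ofReal (x ^ c) = ENNReal.ofReal (M ^ (c + 1) / (c + 1)) := by
  rw [← ofReal_integral_eq_lintegral_ofReal, ← intervalIntegral.integral_of_le hM,
    integral_rpow (Or.inl hc), Real.zero_rpow (by linarith), sub_zero]
  · exact (intervalIntegrable_iff_integrableOn_Ioc_of_le hM).1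
      (intervalIntegral.intervalIntegrable_rpow' hc)
  · filter_upwards [ae_restrict_mem measurableSet_Ioc] with x hx using Real.rpow_nonneg hx.1.le c

lemma mem_tiltedSublevel_of_snoc_mem {n : ℕ} {δ : ℝ} (hδ : 0 ≤ δ) {w : Fin n → ℝ} {x : ℝ}
    (h : (Fin.snoc w x : Fin (n + 1) → ℝ) ∈ tiltedSublevel (n + 1) δ) :
    w ∈ tiltedSublevel n (n + 1 + δ) ∧ x ∈ Ioc 0 ((indexPowProd w)⁻¹ ^ (n + 1 + δ : ℝ)⁻¹) := by
  obtain ⟨hpos, hmono, hle⟩ := h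
  have hw : ∀ i, 0 < w i := fun i => by simpa using hpos i.castSucc
  have hx : 0 < x := by simpa using hpos (Fin.last n)
  have hP := indexPowProd_pos hw
  have hS : (0 : ℝ) < n + 1 + δ := by positivity
  have htop : indexPowProd w * x ^ (n + 1 + δ : ℝ) ≤ 1 := by
    have := hle (Fin.last n)
    rwa [indexPowProd_snoc, Fin.snoc_last, mul_assoc, ← Real.rpow_natCast, ← Real.rpow_add hx,
      Nat.cast_succ] at this
  refine ⟨⟨hw, fun i j hij => ?_, fun i => ?_⟩, hx, ?_⟩
  · simpa using hmono (Fin.castSucc_le_castSucc_iff.2 hij)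
  · have hwx : w i ≤ x := by simpa using hmono (Fin.le_last i.castSucc)
    exact (mul_le_mul_of_nonneg_left (Real.rpow_le_rpow (hw i).le hwx hS.le) hP.le).trans htop
  · rw [Real.le_rpow_inv_iff_of_pos hx.le (by positivity) hS]
    rwa [← one_div, le_div_iff₀' hP]

lemma inv_indexPowProd_snoc_rpow {n : ℕ} {w : Fin n → ℝ} (hw : ∀ i, 0 < w i) {x : ℝ} (hx : 0 < x)
    (γ : ℝ) : (indexPowProd (Fin.snoc w x : Fin (n + 1) → ℝ))⁻¹ ^ γ =
      (indexPowProd w)⁻¹ ^ γ * x ^ (-((n + 1) * γ)) := by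
  have hP := indexPowProd_pos hw
  rw [indexPowProd_snoc, mul_inv, Real.mul_rpow (by positivity) (by positivity),
    ← Real.rpow_natCast, ← Real.rpow_neg hx.le, ← Real.rpow_mul hx.le]
  push_cast
  ring_nf

lemma lintegral_indicator_tiltedSublevel_snoc_le {n : ℕ} {γ δ : ℝ} (hδ : 0 ≤ δ)
    (hγ : (n + 1) * γ < 1) (w : Fin n → ℝ) :
    ∫⁻ x, (tiltedSublevel (n + 1) δ).indicator
        (fun u => ENNReal.ofReal ((indexPowProd u)⁻¹ ^ γ)) (Fin.snoc w x) ≤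
      ENNReal.ofReal (1 - (n + 1) * γ)⁻¹ * (tiltedSublevel n (n + 1 + δ)).indicator
        (fun w => ENNReal.ofReal ((indexPowProd w)⁻¹ ^ (γ + (1 - (n + 1) * γ) / (n + 1 + δ)))) w := by
  set c : ℝ := (n + 1) * γ
  set S : ℝ := n + 1 + δ
  by_cases hw : w ∉ tiltedSublevel n S
  · have hzero : ∀ x, (tiltedSublevel (n + 1) δ).indicator
        (fun u => ENNReal.ofReal ((indexPowProd u)⁻¹ ^ γ)) (Fin.snoc w x) = 0 :=
      fun x => indicator_of_notMem (fun h => hw (mem_tiltedSublevel_of_snoc_mem hδ h).1) _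
    simp [hzero]
  rw [not_not] at hw
  have hP : 0 < (indexPowProd w)⁻¹ := inv_pos.2 (indexPowProd_pos hw.1)
  calc ∫⁻ x, (tiltedSublevel (n + 1) δ).indicator
          (fun u => ENNReal.ofReal ((indexPowProd u)⁻¹ ^ γ)) (Fin.snoc w x)
      ≤ ∫⁻ x in Ioc 0 ((indexPowProd w)⁻¹ ^ S⁻¹),
          ENNReal.ofReal ((indexPowProd w)⁻¹ ^ γ) * ENNReal.ofReal (x ^ (-c)) := by
        rw [← lintegral_indicator measurableSet_Ioc]
        refine lintegral_mono fun x => ?_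
        by_cases hu : (Fin.snoc w x : Fin (n + 1) → ℝ) ∈ tiltedSublevel (n + 1) δ
        · have hx := (mem_tiltedSublevel_of_snoc_mem hδ hu).2
          rw [indicator_of_mem hu, indicator_of_mem hx, ← ENNReal.ofReal_mul (by positivity),
            inv_indexPowProd_snoc_rpow hw.1 hx.1]
        · rw [indicator_of_notMem hu]
          exact zero_le
    _ = ENNReal.ofReal ((indexPowProd w)⁻¹ ^ γ) *
          ENNReal.ofReal (((indexPowProd w)⁻¹ ^ S⁻¹) ^ (-c + 1) / (-c + 1)) := by
        rw [lintegral_const_mul' _ _ ENNReal.ofReal_ne_top,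
          lintegral_Ioc_rpow (by positivity) (by linarith)]
    _ = _ := by
        rw [indicator_of_mem hw, ← ENNReal.ofReal_mul (by positivity),
          ← ENNReal.ofReal_mul (by rw [inv_nonneg]; linarith), ← Real.rpow_mul hP.le,
          show γ + (1 - c) / S = γ + S⁻¹ * (-c + 1) by ring, Real.rpow_add hP]
        ring_nf

lemma setLIntegral_tiltedSublevel_succ_le {n : ℕ} {γ δ : ℝ} (hδ : 0 ≤ δ)
    (hγ : (n + 1) * γ < 1) :
    ∫⁻ u in tiltedSublevel (n + 1) δ, ENNReal.ofReal ((indexPowProd u)⁻¹ ^ γ) ≤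
      ENNReal.ofReal (1 - (n + 1) * γ)⁻¹ * ∫⁻ w in tiltedSublevel n (n + 1 + δ),
        ENNReal.ofReal ((indexPowProd w)⁻¹ ^ (γ + (1 - (n + 1) * γ) / (n + 1 + δ))) := by
  rw [← lintegral_indicator (measurableSet_tiltedSublevel _ _),
    ← lintegral_indicator (measurableSet_tiltedSublevel _ _),
    ← lintegral_const_mul' _ _ ENNReal.ofReal_ne_top]
  exact (lintegral_le_lintegral_lintegral_snoc _).trans
    (lintegral_mono fun w => lintegral_indicator_tiltedSublevel_snoc_le hδ hγ w)

theorem setLIntegral_tiltedSublevel_lt_top (n : ℕ) {γ δ : ℝ} (hγ : n * γ < 1) (hδ : 0 ≤ δ) :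
    ∫⁻ u in tiltedSublevel n δ, ENNReal.ofReal ((indexPowProd u)⁻¹ ^ γ) < ∞ := by
  induction n generalizing γ δ with
  | zero => simp [indexPowProd]
  | succ n ih =>
    push_cast at hγ
    set c : ℝ := (n + 1) * γ
    have hγ' : n * (γ + (1 - c) / (n + 1 + δ)) < 1 :=
      calc n * (γ + (1 - c) / (n + 1 + δ)) ≤ n * (γ + (1 - c) / (n + 1)) := by
            have h : (1 - c) / (n + 1 + δ) ≤ (1 - c) / (n + 1) :=
              div_le_div_of_nonneg_left (by linarith) (by positivity) (by linarith)
            exact mul_le_mul_of_nonneg_left (by linarith) n.cast_nonneg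
        _ = n / (n + 1) := by field_simp; ring
        _ < 1 := by rw [div_lt_one (by positivity)]; linarith
    exact (setLIntegral_tiltedSublevel_succ_le hδ hγ).trans_lt
      (ENNReal.mul_lt_top ENNReal.ofReal_lt_top (ih hγ' (by positivity)))

lemma volume_tiltedSublevel_zero_lt_top (n : ℕ) : volume (tiltedSublevel n 0) < ∞ := by
  simpa using setLIntegral_tiltedSublevel_lt_top n (γ := 0) (by simp) le_rfl

lemma orderedSublevel_one_subset (n : ℕ) :
    orderedSublevel n 1 ⊆ tiltedSublevel n 0 ∪ ⋃ i, {u | u i = 0} := by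
  rintro u ⟨hnonneg, hmono, hle⟩
  by_cases hpos : ∀ i, 0 < u i
  · exact Or.inl ⟨hpos, hmono, fun i => by simpa using hle⟩
  · obtain ⟨i, hi⟩ := not_forall.1 hpos
    exact Or.inr (mem_iUnion.2 ⟨i, le_antisymm (not_lt.1 hi) (hnonneg i)⟩)

lemma volume_orderedSublevel_one_lt_top (n : ℕ) : volume (orderedSublevel n 1) < ∞ := by
  have hnull : volume (⋃ i, {u : Fin n → ℝ | u i = 0}) = 0 :=
    measure_iUnion_null fun i => by simpa [volume_pi] using Measure.pi_hyperplane _ i 0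
  calc volume (orderedSublevel n 1)
      ≤ volume (tiltedSublevel n 0) + volume (⋃ i, {u : Fin n → ℝ | u i = 0}) :=
        (measure_mono (orderedSublevel_one_subset n)).trans (measure_union_le _ _)
    _ < ∞ := by rw [hnull, add_zero]; exact volume_tiltedSublevel_zero_lt_top n

lemma orderedSublevel_subset_smul {n : ℕ} {r : ℝ} (hr : 0 < r) (lam : ℝ) :
    orderedSublevel n (r ^ (∑ j : Fin n, ((j : ℕ) + 1)) * lam) ⊆ r • orderedSublevel n lam := by
  rintro u ⟨hnonneg, hmono, hle⟩
  have hr' : 0 ≤ r⁻¹ := inv_nonneg.2 hr.le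
  refine (mem_smul_set_iff_inv_smul_mem₀ hr.ne' _ _).2 ⟨fun i => ?_, fun i j hij => ?_, ?_⟩
  · exact mul_nonneg hr' (hnonneg i)
  · exact mul_le_mul_of_nonneg_left (hmono hij) hr'
  · rwa [indexPowProd_smul, inv_pow, inv_mul_le_iff₀ (by positivity)]

lemma volume_orderedSublevel_le {n : ℕ} (hn : 0 < n) {lam : ℝ} (hlam : 0 < lam) :
    volume (orderedSublevel n lam) ≤
      ENNReal.ofReal (lam ^ (2 / (n + 1 : ℝ))) * volume (orderedSublevel n 1) := by
  set r : ℝ := lam ^ (2 / (n * (n + 1)) : ℝ)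
  have hr : 0 < r := by positivity
  have hsum : ((∑ j : Fin n, ((j : ℕ) + 1) : ℕ) : ℝ) = n * (n + 1) / 2 := by
    rw [eq_div_iff two_ne_zero]; exact_mod_cast sum_fin_val_add_one_mul_two n
  have hn' : (n : ℝ) ≠ 0 := by positivity
  have hrT : r ^ (∑ j : Fin n, ((j : ℕ) + 1)) = lam := by
    rw [← Real.rpow_natCast, ← Real.rpow_mul hlam.le, hsum]
    convert Real.rpow_one lam using 2
    field_simp
  have hrn : r ^ n = lam ^ (2 / (n + 1 : ℝ)) := by
    rw [← Real.rpow_natCast, ← Real.rpow_mul hlam.le]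
    congr 1
    field_simp
  calc volume (orderedSublevel n lam) ≤ volume (r • orderedSublevel n 1) :=
        measure_mono (by simpa [hrT] using orderedSublevel_subset_smul (n := n) hr 1)
    _ = _ := by rw [Measure.addHaar_smul, Module.finrank_fin_fun, abs_of_pos (pow_pos hr n), hrn]

theorem stmt_12 (p : ℕ) (hp : 1 ≤ p) :
    ∃ C : ℝ, 0 < C ∧ ∀ lam : ℝ, 0 < lam →
      volume {u : Fin p → ℝ | (∀ i, 0 ≤ u i) ∧ Monotone u ∧ (∏ j : Fin p, u j ^ ((j : ℕ) + 1)) ≤ lam}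
        ≤ ENNReal.ofReal (C * lam ^ ((2 : ℝ) / ((p : ℝ) + 1))) := by
  set V := volume (orderedSublevel p 1)
  refine ⟨V.toReal + 1, by positivity, fun lam hlam => ?_⟩
  have hV : V ≤ ENNReal.ofReal (V.toReal + 1) :=
    (ENNReal.le_ofReal_iff_toReal_le (volume_orderedSublevel_one_lt_top p).ne (by positivity)).2
      (by linarith)
  calc volume (orderedSublevel p lam) ≤ ENNReal.ofReal (lam ^ (2 / (p + 1 : ℝ))) * V :=
        volume_orderedSublevel_le hp hlam
    _ ≤ ENNReal.ofReal (lam ^ (2 / (p + 1 : ℝ))) * ENNReal.ofReal (V.toReal + 1) := by gcongr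
    _ = _ := by rw [← ENNReal.ofReal_mul (by positivity), mul_comm]
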